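/- arXiv:1105.5427 — 7 statements merged into one kernel-verified Lean document; each statement's English description precedes it below -/
import Mathlib

section
/- Suppose β₁ > 0, β₂ > 0, x̄ ∈ X, ȳ ∈ ℝ^m, and the excessive gap condition f(x̄; β₂) ≤ d(ȳ; β₁) holds. Then for any maximizer y* of the dual function d over ℝ^m one has −‖y*‖·‖A x̄ − b‖ ≤ φ(x̄) − d(ȳ) ≤ β₁(D₁ + D₂) − ‖A x̄ − b‖²/(2β₂) ≤ β₁(D₁ + D₂). -/
/-! The excessive gap condition squeezes `φ(x̄)` between the two dual values: the smoothing
term costs at most `β₁ (D₁ + D₂)`, so `φ(x̄) + ψ(x̄; β₂) ≤ d(ȳ; β₁) ≤ d(ȳ) + β₁ (D₁ + D₂)`, while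
weak duality at a dual maximizer `y*` and Cauchy–Schwarz give
`d(ȳ) ≤ d(y*) ≤ φ(x̄) + ⟪A x̄ - b, y*⟫ ≤ φ(x̄) + ‖y*‖ ‖A x̄ - b‖`. -/

open scoped RealInnerProductSpace

section DualBounds

variable {α F : Type*} [NormedAddCommGroup F] [InnerProductSpace ℝ F]

lemma le_add_of_mem_lowerBounds_image_add {S : Set α} {f g : α → ℝ} {a a' c : ℝ}
    (ha : a ∈ f '' S) (ha' : a' ∈ lowerBounds ((fun x => f x + g x) '' S))
    (hg : ∀ x ∈ S, g x ≤ c) : a' ≤ a + c := by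
  obtain ⟨x, hx, rfl⟩ := ha
  calc a' ≤ f x + g x := ha' ⟨x, hx, rfl⟩
    _ ≤ f x + c := by gcongr; exact hg x hx

lemma neg_norm_mul_norm_le_sub_of_mem_lowerBounds {S : Set α} {f : α → ℝ} {r : α → F}
    {y : F} {x : α} {δ : ℝ} (hδ : δ ∈ lowerBounds ((fun x => f x + ⟪r x, y⟫) '' S))
    (hx : x ∈ S) : -(‖y‖ * ‖r x‖) ≤ f x - δ := by
  have hweak : δ ≤ f x + ⟪r x, y⟫ := hδ ⟨x, hx, rfl⟩
  have hcs : ⟪r x, y⟫ ≤ ‖r x‖ * ‖y‖ := real_inner_le_norm _ _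
  linarith [mul_comm ‖r x‖ ‖y‖]

end DualBounds

theorem stmt_3_general {m n₁ n₂ : ℕ}
    (X1 : Set (EuclideanSpace ℝ (Fin n₁))) (X2 : Set (EuclideanSpace ℝ (Fin n₂)))
    (φ₁ : EuclideanSpace ℝ (Fin n₁) → ℝ) (φ₂ : EuclideanSpace ℝ (Fin n₂) → ℝ)
    (A₁ : EuclideanSpace ℝ (Fin n₁) →L[ℝ] EuclideanSpace ℝ (Fin m))
    (A₂ : EuclideanSpace ℝ (Fin n₂) →L[ℝ] EuclideanSpace ℝ (Fin m))
    (b : EuclideanSpace ℝ (Fin m))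
    (p₁ : EuclideanSpace ℝ (Fin n₁) → ℝ) (p₂ : EuclideanSpace ℝ (Fin n₂) → ℝ)
    (D₁ D₂ : ℝ)
    (hp₁b : ∀ x ∈ X1, 0 ≤ p₁ x ∧ p₁ x ≤ D₁)
    (hp₂b : ∀ x ∈ X2, 0 ≤ p₂ x ∧ p₂ x ≤ D₂)
    (β₁ β₂ : ℝ) (hβ₁ : 0 < β₁) (hβ₂ : 0 < β₂)
    (d dβ : EuclideanSpace ℝ (Fin m) → ℝ)
    (hd : ∀ y, IsLeast
      ((fun x : EuclideanSpace ℝ (Fin n₁) × EuclideanSpace ℝ (Fin n₂) =>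
        φ₁ x.1 + φ₂ x.2 + ⟪A₁ x.1 + A₂ x.2 - b, y⟫) '' (X1 ×ˢ X2)) (d y))
    (hdβ : ∀ y, IsLeast
      ((fun x : EuclideanSpace ℝ (Fin n₁) × EuclideanSpace ℝ (Fin n₂) =>
        φ₁ x.1 + φ₂ x.2 + ⟪A₁ x.1 + A₂ x.2 - b, y⟫ + β₁ * (p₁ x.1 + p₂ x.2)) '' (X1 ×ˢ X2))
      (dβ y))
    (xb : EuclideanSpace ℝ (Fin n₁) × EuclideanSpace ℝ (Fin n₂))
    (hxb : xb ∈ X1 ×ˢ X2)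
    (yb : EuclideanSpace ℝ (Fin m))
    (hgap : φ₁ xb.1 + φ₂ xb.2 + ‖A₁ xb.1 + A₂ xb.2 - b‖ ^ 2 / (2 * β₂) ≤ dβ yb)
    (ys : EuclideanSpace ℝ (Fin m)) (hys : ∀ y, d y ≤ d ys) :
    -(‖ys‖ * ‖A₁ xb.1 + A₂ xb.2 - b‖) ≤ φ₁ xb.1 + φ₂ xb.2 - d yb ∧
    φ₁ xb.1 + φ₂ xb.2 - d yb ≤ β₁ * (D₁ + D₂) - ‖A₁ xb.1 + A₂ xb.2 - b‖ ^ 2 / (2 * β₂) ∧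
    β₁ * (D₁ + D₂) - ‖A₁ xb.1 + A₂ xb.2 - b‖ ^ 2 / (2 * β₂) ≤ β₁ * (D₁ + D₂) := by
  have hpenalty : ∀ x ∈ X1 ×ˢ X2, β₁ * (p₁ x.1 + p₂ x.2) ≤ β₁ * (D₁ + D₂) := fun x hx =>
    mul_le_mul_of_nonneg_left (add_le_add (hp₁b _ hx.1).2 (hp₂b _ hx.2).2) hβ₁.le
  have hsmoothed : dβ yb ≤ d yb + β₁ * (D₁ + D₂) :=
    le_add_of_mem_lowerBounds_image_add (hd yb).1 (hdβ yb).2 hpenalty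
  have hweak : -(‖ys‖ * ‖A₁ xb.1 + A₂ xb.2 - b‖) ≤ φ₁ xb.1 + φ₂ xb.2 - d ys :=
    neg_norm_mul_norm_le_sub_of_mem_lowerBounds (hd ys).2 hxb
  have hψ : 0 ≤ ‖A₁ xb.1 + A₂ xb.2 - b‖ ^ 2 / (2 * β₂) := by positivity
  exact ⟨by linarith [hys yb], by linarith, by linarith⟩

theorem stmt_3 {m n₁ n₂ : ℕ} (hm : 0 < m) (hn₁ : 0 < n₁) (hn₂ : 0 < n₂)
    (X1 : Set (EuclideanSpace ℝ (Fin n₁))) (X2 : Set (EuclideanSpace ℝ (Fin n₂)))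
    (hX1ne : X1.Nonempty) (hX1cp : IsCompact X1) (hX1cv : Convex ℝ X1)
    (hX2ne : X2.Nonempty) (hX2cp : IsCompact X2) (hX2cv : Convex ℝ X2)
    (φ₁ : EuclideanSpace ℝ (Fin n₁) → ℝ) (φ₂ : EuclideanSpace ℝ (Fin n₂) → ℝ)
    (hφ₁c : Continuous φ₁) (hφ₁cv : ConvexOn ℝ Set.univ φ₁)
    (hφ₂c : Continuous φ₂) (hφ₂cv : ConvexOn ℝ Set.univ φ₂)
    (A₁ : EuclideanSpace ℝ (Fin n₁) →L[ℝ] EuclideanSpace ℝ (Fin m))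
    (A₂ : EuclideanSpace ℝ (Fin n₂) →L[ℝ] EuclideanSpace ℝ (Fin m))
    (b : EuclideanSpace ℝ (Fin m))
    (p₁ : EuclideanSpace ℝ (Fin n₁) → ℝ) (p₂ : EuclideanSpace ℝ (Fin n₂) → ℝ)
    (hp₁c : Continuous p₁) (hp₂c : Continuous p₂)
    (D₁ D₂ : ℝ)
    (hp₁b : ∀ x ∈ X1, 0 ≤ p₁ x ∧ p₁ x ≤ D₁)
    (hp₂b : ∀ x ∈ X2, 0 ≤ p₂ x ∧ p₂ x ≤ D₂)
    (β₁ β₂ : ℝ) (hβ₁ : 0 < β₁) (hβ₂ : 0 < β₂)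
    (d dβ : EuclideanSpace ℝ (Fin m) → ℝ)
    (hd : ∀ y, IsLeast
      ((fun x : EuclideanSpace ℝ (Fin n₁) × EuclideanSpace ℝ (Fin n₂) =>
        φ₁ x.1 + φ₂ x.2 + ⟪A₁ x.1 + A₂ x.2 - b, y⟫) '' (X1 ×ˢ X2)) (d y))
    (hdβ : ∀ y, IsLeast
      ((fun x : EuclideanSpace ℝ (Fin n₁) × EuclideanSpace ℝ (Fin n₂) =>
        φ₁ x.1 + φ₂ x.2 + ⟪A₁ x.1 + A₂ x.2 - b, y⟫ + β₁ * (p₁ x.1 + p₂ x.2)) '' (X1 ×ˢ X2))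
      (dβ y))
    (xb : EuclideanSpace ℝ (Fin n₁) × EuclideanSpace ℝ (Fin n₂))
    (hxb : xb ∈ X1 ×ˢ X2)
    (yb : EuclideanSpace ℝ (Fin m))
    (hgap : φ₁ xb.1 + φ₂ xb.2 + ‖A₁ xb.1 + A₂ xb.2 - b‖ ^ 2 / (2 * β₂) ≤ dβ yb)
    (ys : EuclideanSpace ℝ (Fin m)) (hys : ∀ y, d y ≤ d ys) :
    -(‖ys‖ * ‖A₁ xb.1 + A₂ xb.2 - b‖) ≤ φ₁ xb.1 + φ₂ xb.2 - d yb ∧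
    φ₁ xb.1 + φ₂ xb.2 - d yb ≤ β₁ * (D₁ + D₂) - ‖A₁ xb.1 + A₂ xb.2 - b‖ ^ 2 / (2 * β₂) ∧
    β₁ * (D₁ + D₂) - ‖A₁ xb.1 + A₂ xb.2 - b‖ ^ 2 / (2 * β₂) ≤ β₁ * (D₁ + D₂) :=
  stmt_3_general X1 X2 φ₁ φ₂ A₁ A₂ b p₁ p₂ D₁ D₂ hp₁b hp₂b β₁ β₂ hβ₁ hβ₂ d dβ hd hdβ xb hxb yb hgap
    ys hys
end

section
/- Suppose β₁ > 0, β₂ > 0, x̄ ∈ X, ȳ ∈ ℝ^m, the excessive gap condition f(x̄; β₂) ≤ d(ȳ; β₁) holds, and y* is a maximizer of the dual function d over ℝ^m. Then the feasibility gap satisfies ‖A x̄ − b‖ ≤ β₂·[‖y*‖ + √(‖y*‖² + (2β₁/β₂)(D₁ + D₂))]. -/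
/-!
Evaluating the smoothed objective at a minimiser for `d(ȳ)` gives `d(ȳ; β₁) ≤ d(ȳ) + β₁(D₁ + D₂)`,
and weak duality at `x̄` with Cauchy–Schwarz gives `d(ȳ) ≤ d(y*) ≤ φ(x̄) + ‖Ax̄ − b‖‖y*‖`.
With the excessive gap condition, `r = ‖Ax̄ − b‖` then satisfies the quadratic inequality
`r² / (2β₂) ≤ r‖y*‖ + β₁(D₁ + D₂)`, and the bound is its larger root.
-/

open scoped RealInnerProductSpace

theorem IsLeast.image_add_le_add {α : Type*} {S : Set α} {F G : α → ℝ} {a b c : ℝ}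
    (ha : IsLeast (F '' S) a) (hb : IsLeast ((fun x => F x + G x) '' S) b)
    (hG : ∀ x ∈ S, G x ≤ c) : b ≤ a + c := by
  obtain ⟨x, hx, rfl⟩ := ha.1
  calc b ≤ F x + G x := hb.2 ⟨x, hx, rfl⟩
    _ ≤ F x + c := by gcongr; exact hG x hx

theorem le_mul_add_sqrt_of_sq_div_le {r s c β : ℝ} (hβ : 0 < β)
    (h : r ^ 2 / (2 * β) ≤ r * s + c) :
    r ≤ β * (s + √(s ^ 2 + 2 * c / β)) := by
  have hsq : (r - β * s) ^ 2 ≤ β ^ 2 * (s ^ 2 + 2 * c / β) := by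
    rw [div_le_iff₀ (by positivity)] at h
    have : β ^ 2 * (2 * c / β) = 2 * β * c := by field_simp
    nlinarith
  have hroot : r - β * s ≤ β * √(s ^ 2 + 2 * c / β) :=
    calc r - β * s ≤ √(β ^ 2 * (s ^ 2 + 2 * c / β)) :=
        (le_abs_self _).trans (Real.abs_le_sqrt hsq)
      _ = β * √(s ^ 2 + 2 * c / β) := by
        rw [Real.sqrt_mul (sq_nonneg _), Real.sqrt_sq hβ.le]
  linarith

theorem stmt_4_general {m n₁ n₂ : ℕ}
    (X1 : Set (EuclideanSpace ℝ (Fin n₁))) (X2 : Set (EuclideanSpace ℝ (Fin n₂)))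
    (φ₁ : EuclideanSpace ℝ (Fin n₁) → ℝ) (φ₂ : EuclideanSpace ℝ (Fin n₂) → ℝ)
    (A₁ : EuclideanSpace ℝ (Fin n₁) →L[ℝ] EuclideanSpace ℝ (Fin m))
    (A₂ : EuclideanSpace ℝ (Fin n₂) →L[ℝ] EuclideanSpace ℝ (Fin m))
    (b : EuclideanSpace ℝ (Fin m))
    (p₁ : EuclideanSpace ℝ (Fin n₁) → ℝ) (p₂ : EuclideanSpace ℝ (Fin n₂) → ℝ)
    (D₁ D₂ : ℝ)
    (hp₁b : ∀ x ∈ X1, 0 ≤ p₁ x ∧ p₁ x ≤ D₁)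
    (hp₂b : ∀ x ∈ X2, 0 ≤ p₂ x ∧ p₂ x ≤ D₂)
    (β₁ β₂ : ℝ) (hβ₁ : 0 < β₁) (hβ₂ : 0 < β₂)
    (d dβ : EuclideanSpace ℝ (Fin m) → ℝ)
    (hd : ∀ y, IsLeast
      ((fun x : EuclideanSpace ℝ (Fin n₁) × EuclideanSpace ℝ (Fin n₂) =>
        φ₁ x.1 + φ₂ x.2 + ⟪A₁ x.1 + A₂ x.2 - b, y⟫) '' (X1 ×ˢ X2)) (d y))
    (hdβ : ∀ y, IsLeast
      ((fun x : EuclideanSpace ℝ (Fin n₁) × EuclideanSpace ℝ (Fin n₂) =>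
        φ₁ x.1 + φ₂ x.2 + ⟪A₁ x.1 + A₂ x.2 - b, y⟫ + β₁ * (p₁ x.1 + p₂ x.2)) '' (X1 ×ˢ X2))
      (dβ y))
    (xb : EuclideanSpace ℝ (Fin n₁) × EuclideanSpace ℝ (Fin n₂))
    (hxb : xb ∈ X1 ×ˢ X2)
    (yb : EuclideanSpace ℝ (Fin m))
    (hgap : φ₁ xb.1 + φ₂ xb.2 + ‖A₁ xb.1 + A₂ xb.2 - b‖ ^ 2 / (2 * β₂) ≤ dβ yb)
    (ys : EuclideanSpace ℝ (Fin m)) (hys : ∀ y, d y ≤ d ys) :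
    ‖A₁ xb.1 + A₂ xb.2 - b‖ ≤
      β₂ * (‖ys‖ + Real.sqrt (‖ys‖ ^ 2 + 2 * β₁ / β₂ * (D₁ + D₂))) := by
  set r := ‖A₁ xb.1 + A₂ xb.2 - b‖
  have hsmooth : dβ yb ≤ d yb + β₁ * (D₁ + D₂) :=
    (hd yb).image_add_le_add (hdβ yb) fun x hx =>
      mul_le_mul_of_nonneg_left (add_le_add (hp₁b _ hx.1).2 (hp₂b _ hx.2).2) hβ₁.le
  have hweak : d ys ≤ φ₁ xb.1 + φ₂ xb.2 + r * ‖ys‖ :=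
    calc d ys ≤ φ₁ xb.1 + φ₂ xb.2 + ⟪A₁ xb.1 + A₂ xb.2 - b, ys⟫ :=
          (hd ys).2 ⟨xb, hxb, rfl⟩
      _ ≤ φ₁ xb.1 + φ₂ xb.2 + r * ‖ys‖ := by gcongr; exact real_inner_le_norm _ _
  have hquad : r ^ 2 / (2 * β₂) ≤ r * ‖ys‖ + β₁ * (D₁ + D₂) := by linarith [hys yb]
  convert le_mul_add_sqrt_of_sq_div_le hβ₂ hquad using 4
  ring

theorem stmt_4 {m n₁ n₂ : ℕ} (hm : 0 < m) (hn₁ : 0 < n₁) (hn₂ : 0 < n₂)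
    (X1 : Set (EuclideanSpace ℝ (Fin n₁))) (X2 : Set (EuclideanSpace ℝ (Fin n₂)))
    (hX1ne : X1.Nonempty) (hX1cp : IsCompact X1) (hX1cv : Convex ℝ X1)
    (hX2ne : X2.Nonempty) (hX2cp : IsCompact X2) (hX2cv : Convex ℝ X2)
    (φ₁ : EuclideanSpace ℝ (Fin n₁) → ℝ) (φ₂ : EuclideanSpace ℝ (Fin n₂) → ℝ)
    (hφ₁c : Continuous φ₁) (hφ₁cv : ConvexOn ℝ Set.univ φ₁)
    (hφ₂c : Continuous φ₂) (hφ₂cv : ConvexOn ℝ Set.univ φ₂)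
    (A₁ : EuclideanSpace ℝ (Fin n₁) →L[ℝ] EuclideanSpace ℝ (Fin m))
    (A₂ : EuclideanSpace ℝ (Fin n₂) →L[ℝ] EuclideanSpace ℝ (Fin m))
    (b : EuclideanSpace ℝ (Fin m))
    (p₁ : EuclideanSpace ℝ (Fin n₁) → ℝ) (p₂ : EuclideanSpace ℝ (Fin n₂) → ℝ)
    (hp₁c : Continuous p₁) (hp₂c : Continuous p₂)
    (D₁ D₂ : ℝ)
    (hp₁b : ∀ x ∈ X1, 0 ≤ p₁ x ∧ p₁ x ≤ D₁)
    (hp₂b : ∀ x ∈ X2, 0 ≤ p₂ x ∧ p₂ x ≤ D₂)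
    (β₁ β₂ : ℝ) (hβ₁ : 0 < β₁) (hβ₂ : 0 < β₂)
    (d dβ : EuclideanSpace ℝ (Fin m) → ℝ)
    (hd : ∀ y, IsLeast
      ((fun x : EuclideanSpace ℝ (Fin n₁) × EuclideanSpace ℝ (Fin n₂) =>
        φ₁ x.1 + φ₂ x.2 + ⟪A₁ x.1 + A₂ x.2 - b, y⟫) '' (X1 ×ˢ X2)) (d y))
    (hdβ : ∀ y, IsLeast
      ((fun x : EuclideanSpace ℝ (Fin n₁) × EuclideanSpace ℝ (Fin n₂) =>
        φ₁ x.1 + φ₂ x.2 + ⟪A₁ x.1 + A₂ x.2 - b, y⟫ + β₁ * (p₁ x.1 + p₂ x.2)) '' (X1 ×ˢ X2))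
      (dβ y))
    (xb : EuclideanSpace ℝ (Fin n₁) × EuclideanSpace ℝ (Fin n₂))
    (hxb : xb ∈ X1 ×ˢ X2)
    (yb : EuclideanSpace ℝ (Fin m))
    (hgap : φ₁ xb.1 + φ₂ xb.2 + ‖A₁ xb.1 + A₂ xb.2 - b‖ ^ 2 / (2 * β₂) ≤ dβ yb)
    (ys : EuclideanSpace ℝ (Fin m)) (hys : ∀ y, d y ≤ d ys) :
    ‖A₁ xb.1 + A₂ xb.2 - b‖ ≤
      β₂ * (‖ys‖ + Real.sqrt (‖ys‖ ^ 2 + 2 * β₁ / β₂ * (D₁ + D₂))) :=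
  stmt_4_general X1 X2 φ₁ φ₂ A₁ A₂ b p₁ p₂ D₁ D₂ hp₁b hp₂b β₁ β₂ hβ₁ hβ₂ d dβ hd hdβ xb hxb yb hgap
    ys hys
end

section
/- Let β₁ > 0 and β₂ > 0 satisfy β₁β₂ ≥ 2·max{‖A₁‖²/σ₁, ‖A₂‖²/σ₂}. Let x^c = (x^c₁, x^c₂) ∈ X be the prox-center, i.e., for i = 1, 2 the point x^cᵢ minimizes pᵢ over Xᵢ and pᵢ(x^cᵢ) = 0. Define ȳ := (A x^c − b)/β₂ and let x̄ = (x̄₁, x̄₂) ∈ X be such that for i = 1, 2 the point x̄ᵢ minimizes over Xᵢ the function xᵢ ↦ φᵢ(xᵢ) + ⟨ȳ, Aᵢ(xᵢ − x^cᵢ)⟩ + (‖Aᵢ‖²/β₂)·‖xᵢ − x^cᵢ‖². Then the excessive gap condition f(x̄; β₂) ≤ d(ȳ; β₁) holds. -/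
open scoped RealInnerProductSpace
open Filter Set
open scoped Topology

/- Since `A xᶜ - b = β₂ ȳ`, we have `A x - b = β₂ ȳ + A (x - xᶜ)` for every `x`. Expanding the
square, `f(x̄; β₂) ≤ β₂‖ȳ‖²/2 + ∑ᵢ [φᵢ(x̄ᵢ) + ⟨ȳ, Aᵢ(x̄ᵢ - xᶜᵢ)⟩ + ‖Aᵢ‖²/β₂ ‖x̄ᵢ - xᶜᵢ‖²]`, using
`‖a + b‖² ≤ 2‖a‖² + 2‖b‖²`. By the choice of `x̄`, the sum is at most the same expression at the
minimizer `x*` of the smoothed Lagrangian defining `d(ȳ; β₁)`. Since `pᵢ` is `σᵢ`-strongly convex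
with minimum `0` at `xᶜᵢ`, `pᵢ(x*ᵢ) ≥ σᵢ/2 ‖x*ᵢ - xᶜᵢ‖²`, and the condition on `β₁β₂` turns the
quadratic terms into `β₁ pᵢ(x*ᵢ)`. What remains is `d(ȳ; β₁) - β₂‖ȳ‖²/2 ≤ d(ȳ; β₁)`. -/

theorem StrongConvexOn.add_sq_norm_sub_le_of_isMinOn {E : Type*} [NormedAddCommGroup E]
    [NormedSpace ℝ E] {s : Set E} {m : ℝ} {f : E → ℝ} {c x : E}
    (hf : StrongConvexOn s m f) (hmin : IsMinOn f s c) (hc : c ∈ s) (hx : x ∈ s) :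
    f c + m / 2 * ‖x - c‖ ^ 2 ≤ f x := by
  have along_segment : ∀ t ∈ Ioc (0 : ℝ) 1, f c + (1 - t) * (m / 2 * ‖x - c‖ ^ 2) ≤ f x := by
    rintro t ⟨ht0, ht1⟩
    have hconv := hf.2 hx hc ht0.le (sub_nonneg.2 ht1) (add_sub_cancel t 1)
    have hle := isMinOn_iff.1 hmin _ (hf.1 hx hc ht0.le (sub_nonneg.2 ht1) (add_sub_cancel t 1))
    simp only [smul_eq_mul] at hconv
    refine le_of_mul_le_mul_left ?_ ht0
    linear_combination hle + hconv
  have hlim : Tendsto (fun t : ℝ => f c + (1 - t) * (m / 2 * ‖x - c‖ ^ 2)) (𝓝[>] 0)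
      (𝓝 (f c + (1 - 0) * (m / 2 * ‖x - c‖ ^ 2))) :=
    ((continuous_const.add ((continuous_const.sub continuous_id).mul continuous_const)).tendsto
      0).mono_left nhdsWithin_le_nhds
  simpa using le_of_tendsto hlim (mem_of_superset (Ioc_mem_nhdsGT one_pos) along_segment)

theorem StrongConvexOn.div_mul_sq_norm_sub_le {E : Type*} [NormedAddCommGroup E]
    [NormedSpace ℝ E] {s : Set E} {σ L β₁ β₂ : ℝ} {p : E → ℝ} {c z : E}
    (hp : StrongConvexOn s σ p) (hmin : IsMinOn p s c) (hc : c ∈ s) (hz : z ∈ s)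
    (hσ : 0 < σ) (hβ₁ : 0 ≤ β₁) (hβ₂ : 0 < β₂) (hL : 2 * (L / σ) ≤ β₁ * β₂) :
    L / β₂ * ‖z - c‖ ^ 2 ≤ β₁ * (p z - p c) := by
  have hcoef : L / β₂ ≤ β₁ * (σ / 2) := by
    have := (div_le_iff₀ hσ).1 (show L / σ ≤ β₁ * β₂ / 2 by linarith)
    rw [div_le_iff₀ hβ₂]
    linarith
  calc L / β₂ * ‖z - c‖ ^ 2 ≤ β₁ * (σ / 2) * ‖z - c‖ ^ 2 := by gcongr
    _ ≤ β₁ * (p z - p c) := by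
      rw [mul_assoc]
      gcongr
      linarith [hp.add_sq_norm_sub_le_of_isMinOn hmin hc hz]

section

variable {F : Type*} [NormedAddCommGroup F] [InnerProductSpace ℝ F] {β : ℝ}

theorem sq_norm_smul_add_add_div_le (hβ : 0 < β) (y u v : F) :
    ‖β • y + (u + v)‖ ^ 2 / (2 * β) ≤ β / 2 * ‖y‖ ^ 2 + ⟪y, u + v⟫ + (‖u‖ ^ 2 + ‖v‖ ^ 2) / β := by
  have hexpand : ‖β • y + (u + v)‖ ^ 2 = β ^ 2 * ‖y‖ ^ 2 + 2 * β * ⟪y, u + v⟫ + ‖u + v‖ ^ 2 := by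
    rw [norm_add_sq_real, norm_smul, Real.norm_of_nonneg hβ.le, real_inner_smul_left]
    ring
  have hsum : ‖u + v‖ ^ 2 ≤ 2 * (‖u‖ ^ 2 + ‖v‖ ^ 2) := by
    nlinarith [parallelogram_law_with_norm ℝ u v, sq_nonneg ‖u - v‖]
  rw [hexpand, div_le_iff₀ (by positivity)]
  have : (β / 2 * ‖y‖ ^ 2 + ⟪y, u + v⟫ + (‖u‖ ^ 2 + ‖v‖ ^ 2) / β) * (2 * β) =
      β ^ 2 * ‖y‖ ^ 2 + 2 * β * ⟪y, u + v⟫ + 2 * (‖u‖ ^ 2 + ‖v‖ ^ 2) := by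
    field_simp
  linarith

theorem sq_norm_smul_add_apply_add_apply_div_le {E₁ E₂ : Type*} [NormedAddCommGroup E₁]
    [NormedSpace ℝ E₁] [NormedAddCommGroup E₂] [NormedSpace ℝ E₂] (hβ : 0 < β)
    (A₁ : E₁ →L[ℝ] F) (A₂ : E₂ →L[ℝ] F) (y : F) (r₁ : E₁) (r₂ : E₂) :
    ‖β • y + (A₁ r₁ + A₂ r₂)‖ ^ 2 / (2 * β) ≤ β / 2 * ‖y‖ ^ 2 +
      (⟪y, A₁ r₁⟫ + ‖A₁‖ ^ 2 / β * ‖r₁‖ ^ 2) + (⟪y, A₂ r₂⟫ + ‖A₂‖ ^ 2 / β * ‖r₂‖ ^ 2) := by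
  have hA₁ : ‖A₁ r₁‖ ^ 2 ≤ ‖A₁‖ ^ 2 * ‖r₁‖ ^ 2 := by
    rw [← mul_pow]; gcongr; exact A₁.le_opNorm r₁
  have hA₂ : ‖A₂ r₂‖ ^ 2 ≤ ‖A₂‖ ^ 2 * ‖r₂‖ ^ 2 := by
    rw [← mul_pow]; gcongr; exact A₂.le_opNorm r₂
  have hquad : (‖A₁ r₁‖ ^ 2 + ‖A₂ r₂‖ ^ 2) / β ≤
      ‖A₁‖ ^ 2 / β * ‖r₁‖ ^ 2 + ‖A₂‖ ^ 2 / β * ‖r₂‖ ^ 2 := by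
    rw [div_mul_eq_mul_div, div_mul_eq_mul_div, ← add_div]
    gcongr
  linarith [sq_norm_smul_add_add_div_le hβ y (A₁ r₁) (A₂ r₂),
    inner_add_right (𝕜 := ℝ) y (A₁ r₁) (A₂ r₂)]

end

theorem stmt_5_general {m n₁ n₂ : ℕ}
    (X1 : Set (EuclideanSpace ℝ (Fin n₁))) (X2 : Set (EuclideanSpace ℝ (Fin n₂)))
    (φ₁ : EuclideanSpace ℝ (Fin n₁) → ℝ) (φ₂ : EuclideanSpace ℝ (Fin n₂) → ℝ)
    (A₁ : EuclideanSpace ℝ (Fin n₁) →L[ℝ] EuclideanSpace ℝ (Fin m))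
    (A₂ : EuclideanSpace ℝ (Fin n₂) →L[ℝ] EuclideanSpace ℝ (Fin m))
    (b : EuclideanSpace ℝ (Fin m))
    (p₁ : EuclideanSpace ℝ (Fin n₁) → ℝ) (p₂ : EuclideanSpace ℝ (Fin n₂) → ℝ)
    (σ₁ σ₂ : ℝ) (hσ₁ : 0 < σ₁) (hσ₂ : 0 < σ₂)
    (hp₁sc : ConvexOn ℝ X1 (fun x => p₁ x - σ₁ / 2 * ‖x‖ ^ 2))
    (hp₂sc : ConvexOn ℝ X2 (fun x => p₂ x - σ₂ / 2 * ‖x‖ ^ 2))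
    (β₁ β₂ : ℝ) (hβ₁ : 0 < β₁) (hβ₂ : 0 < β₂)
    (hββ : β₁ * β₂ ≥ 2 * max (‖A₁‖ ^ 2 / σ₁) (‖A₂‖ ^ 2 / σ₂))
    (xc : EuclideanSpace ℝ (Fin n₁) × EuclideanSpace ℝ (Fin n₂))
    (hxc : xc ∈ X1 ×ˢ X2)
    (hxc1 : ∀ z ∈ X1, p₁ xc.1 ≤ p₁ z) (hxc2 : ∀ z ∈ X2, p₂ xc.2 ≤ p₂ z)
    (hxc10 : p₁ xc.1 = 0) (hxc20 : p₂ xc.2 = 0)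
    (yb : EuclideanSpace ℝ (Fin m))
    (hyb : yb = β₂⁻¹ • (A₁ xc.1 + A₂ xc.2 - b))
    (xb : EuclideanSpace ℝ (Fin n₁) × EuclideanSpace ℝ (Fin n₂))
    (hxb1 : ∀ z ∈ X1,
      φ₁ xb.1 + ⟪yb, A₁ (xb.1 - xc.1)⟫ + ‖A₁‖ ^ 2 / β₂ * ‖xb.1 - xc.1‖ ^ 2 ≤
      φ₁ z + ⟪yb, A₁ (z - xc.1)⟫ + ‖A₁‖ ^ 2 / β₂ * ‖z - xc.1‖ ^ 2)
    (hxb2 : ∀ z ∈ X2,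
      φ₂ xb.2 + ⟪yb, A₂ (xb.2 - xc.2)⟫ + ‖A₂‖ ^ 2 / β₂ * ‖xb.2 - xc.2‖ ^ 2 ≤
      φ₂ z + ⟪yb, A₂ (z - xc.2)⟫ + ‖A₂‖ ^ 2 / β₂ * ‖z - xc.2‖ ^ 2)
    (dβ : EuclideanSpace ℝ (Fin m) → ℝ)
    (hdβ : ∀ y, IsLeast
      ((fun x : EuclideanSpace ℝ (Fin n₁) × EuclideanSpace ℝ (Fin n₂) =>
        φ₁ x.1 + φ₂ x.2 + ⟪A₁ x.1 + A₂ x.2 - b, y⟫ + β₁ * (p₁ x.1 + p₂ x.2)) '' (X1 ×ˢ X2))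
      (dβ y)) :
    φ₁ xb.1 + φ₂ xb.2 + ‖A₁ xb.1 + A₂ xb.2 - b‖ ^ 2 / (2 * β₂) ≤ dβ yb := by
  obtain ⟨⟨xs, ⟨hxs₁, hxs₂⟩, hdxs⟩, -⟩ := hdβ yb
  have hresidual : ∀ x : EuclideanSpace ℝ (Fin n₁) × EuclideanSpace ℝ (Fin n₂),
      A₁ x.1 + A₂ x.2 - b = β₂ • yb + (A₁ (x.1 - xc.1) + A₂ (x.2 - xc.2)) := by
    intro x
    rw [hyb, smul_inv_smul₀ hβ₂.ne', map_sub, map_sub]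
    abel
  have hprimal := sq_norm_smul_add_apply_add_apply_div_le hβ₂ A₁ A₂ yb (xb.1 - xc.1) (xb.2 - xc.2)
  have hdual : ⟪A₁ xs.1 + A₂ xs.2 - b, yb⟫ =
      β₂ * ‖yb‖ ^ 2 + ⟪yb, A₁ (xs.1 - xc.1)⟫ + ⟪yb, A₂ (xs.2 - xc.2)⟫ := by
    rw [hresidual xs, inner_add_left, inner_add_left, real_inner_smul_left,
      real_inner_self_eq_norm_sq, real_inner_comm, real_inner_comm (A₂ _)]
    ring
  have hprox₁ := (strongConvexOn_iff_convex.2 hp₁sc).div_mul_sq_norm_sub_le (isMinOn_iff.2 hxc1)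
    hxc.1 hxs₁ hσ₁ hβ₁.le hβ₂ ((mul_le_mul_of_nonneg_left (le_max_left _ _) two_pos.le).trans hββ)
  have hprox₂ := (strongConvexOn_iff_convex.2 hp₂sc).div_mul_sq_norm_sub_le (isMinOn_iff.2 hxc2)
    hxc.2 hxs₂ hσ₂ hβ₁.le hβ₂ ((mul_le_mul_of_nonneg_left (le_max_right _ _) two_pos.le).trans hββ)
  rw [← hresidual xb] at hprimal
  rw [hxc10] at hprox₁
  rw [hxc20] at hprox₂
  rw [← hdxs]
  linarith [hxb1 xs.1 hxs₁, hxb2 xs.2 hxs₂, show 0 ≤ β₂ * ‖yb‖ ^ 2 by positivity]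

theorem stmt_5 {m n₁ n₂ : ℕ} (hm : 0 < m) (hn₁ : 0 < n₁) (hn₂ : 0 < n₂)
    (X1 : Set (EuclideanSpace ℝ (Fin n₁))) (X2 : Set (EuclideanSpace ℝ (Fin n₂)))
    (hX1ne : X1.Nonempty) (hX1cp : IsCompact X1) (hX1cv : Convex ℝ X1)
    (hX2ne : X2.Nonempty) (hX2cp : IsCompact X2) (hX2cv : Convex ℝ X2)
    (φ₁ : EuclideanSpace ℝ (Fin n₁) → ℝ) (φ₂ : EuclideanSpace ℝ (Fin n₂) → ℝ)
    (hφ₁c : Continuous φ₁) (hφ₁cv : ConvexOn ℝ Set.univ φ₁)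
    (hφ₂c : Continuous φ₂) (hφ₂cv : ConvexOn ℝ Set.univ φ₂)
    (A₁ : EuclideanSpace ℝ (Fin n₁) →L[ℝ] EuclideanSpace ℝ (Fin m))
    (A₂ : EuclideanSpace ℝ (Fin n₂) →L[ℝ] EuclideanSpace ℝ (Fin m))
    (b : EuclideanSpace ℝ (Fin m))
    (p₁ : EuclideanSpace ℝ (Fin n₁) → ℝ) (p₂ : EuclideanSpace ℝ (Fin n₂) → ℝ)
    (hp₁c : Continuous p₁) (hp₂c : Continuous p₂)
    (σ₁ σ₂ : ℝ) (hσ₁ : 0 < σ₁) (hσ₂ : 0 < σ₂)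
    (hp₁sc : ConvexOn ℝ X1 (fun x => p₁ x - σ₁ / 2 * ‖x‖ ^ 2))
    (hp₂sc : ConvexOn ℝ X2 (fun x => p₂ x - σ₂ / 2 * ‖x‖ ^ 2))
    (hp₁nn : ∀ x ∈ X1, 0 ≤ p₁ x) (hp₂nn : ∀ x ∈ X2, 0 ≤ p₂ x)
    (β₁ β₂ : ℝ) (hβ₁ : 0 < β₁) (hβ₂ : 0 < β₂)
    (hββ : β₁ * β₂ ≥ 2 * max (‖A₁‖ ^ 2 / σ₁) (‖A₂‖ ^ 2 / σ₂))
    (xc : EuclideanSpace ℝ (Fin n₁) × EuclideanSpace ℝ (Fin n₂))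
    (hxc : xc ∈ X1 ×ˢ X2)
    (hxc1 : ∀ z ∈ X1, p₁ xc.1 ≤ p₁ z) (hxc2 : ∀ z ∈ X2, p₂ xc.2 ≤ p₂ z)
    (hxc10 : p₁ xc.1 = 0) (hxc20 : p₂ xc.2 = 0)
    (yb : EuclideanSpace ℝ (Fin m))
    (hyb : yb = β₂⁻¹ • (A₁ xc.1 + A₂ xc.2 - b))
    (xb : EuclideanSpace ℝ (Fin n₁) × EuclideanSpace ℝ (Fin n₂))
    (hxb : xb ∈ X1 ×ˢ X2)
    (hxb1 : ∀ z ∈ X1,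
      φ₁ xb.1 + ⟪yb, A₁ (xb.1 - xc.1)⟫ + ‖A₁‖ ^ 2 / β₂ * ‖xb.1 - xc.1‖ ^ 2 ≤
      φ₁ z + ⟪yb, A₁ (z - xc.1)⟫ + ‖A₁‖ ^ 2 / β₂ * ‖z - xc.1‖ ^ 2)
    (hxb2 : ∀ z ∈ X2,
      φ₂ xb.2 + ⟪yb, A₂ (xb.2 - xc.2)⟫ + ‖A₂‖ ^ 2 / β₂ * ‖xb.2 - xc.2‖ ^ 2 ≤
      φ₂ z + ⟪yb, A₂ (z - xc.2)⟫ + ‖A₂‖ ^ 2 / β₂ * ‖z - xc.2‖ ^ 2)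
    (dβ : EuclideanSpace ℝ (Fin m) → ℝ)
    (hdβ : ∀ y, IsLeast
      ((fun x : EuclideanSpace ℝ (Fin n₁) × EuclideanSpace ℝ (Fin n₂) =>
        φ₁ x.1 + φ₂ x.2 + ⟪A₁ x.1 + A₂ x.2 - b, y⟫ + β₁ * (p₁ x.1 + p₂ x.2)) '' (X1 ×ˢ X2))
      (dβ y)) :
    φ₁ xb.1 + φ₂ xb.2 + ‖A₁ xb.1 + A₂ xb.2 - b‖ ^ 2 / (2 * β₂) ≤ dβ yb :=
  stmt_5_general X1 X2 φ₁ φ₂ A₁ A₂ b p₁ p₂ σ₁ σ₂ hσ₁ hσ₂ hp₁sc hp₂sc β₁ β₂ hβ₁ hβ₂ hββ xc hxc hxc1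
    hxc2 hxc10 hxc20 yb hyb xb hxb1 hxb2 dβ hdβ
end

section
/- Let τ ∈ (0, 1), let τ⁺ be a real number with 0 < τ⁺ ≤ τ/(τ + 1), and let L̄ ≥ 0. If β₁ > 0 and β₂ > 0 satisfy β₁β₂ ≥ (τ²/(1 − τ)²)·L̄, then the updated parameters β₁⁺ := (1 − τ)β₁ and β₂⁺ := (1 − τ)β₂ satisfy β₁⁺β₂⁺ ≥ ((τ⁺)²/(1 − τ⁺)²)·L̄; moreover 0 < τ⁺ < 1/2. -/
/-!
Since `t ↦ t / (1 - t)` inverts `s ↦ s / (s + 1)`, the step-size condition `τ⁺ ≤ τ / (τ + 1)` says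
exactly `τ⁺ / (1 - τ⁺) ≤ τ`. Hence `(τ⁺ / (1 - τ⁺))² L̄ ≤ τ² L̄ ≤ (1 - τ)² β₁ β₂`.
-/

lemma div_add_one_lt_one_half {s : ℝ} (hs : 0 < s + 1) (hs1 : s < 1) : s / (s + 1) < 1 / 2 := by
  rw [div_lt_div_iff₀ hs two_pos]
  linarith

lemma div_one_sub_le_of_le_div_add_one {s t : ℝ} (hs : 0 < s + 1) (ht : t ≤ s / (s + 1)) :
    t / (1 - t) ≤ s := by
  rw [le_div_iff₀ hs] at ht
  have ht1 : 0 < 1 - t := by nlinarith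
  rw [div_le_iff₀ ht1]
  linarith

theorem stmt_9_general (τ : ℝ) (hτ : τ ∈ Set.Ioo (0 : ℝ) 1)
    (τp : ℝ) (hτp : 0 < τp) (hτp' : τp ≤ τ / (τ + 1))
    (L : ℝ) (hL : 0 ≤ L)
    (β₁ β₂ : ℝ)
    (h : β₁ * β₂ ≥ τ ^ 2 / (1 - τ) ^ 2 * L) :
    (1 - τ) * β₁ * ((1 - τ) * β₂) ≥ τp ^ 2 / (1 - τp) ^ 2 * L ∧ 0 < τp ∧ τp < 1 / 2 := by
  obtain ⟨hτ0, hτ1⟩ := hτ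
  have hτ_succ : 0 < τ + 1 := by linarith
  have hτp_half : τp < 1 / 2 := hτp'.trans_lt (div_add_one_lt_one_half hτ_succ hτ1)
  have hratio : τp / (1 - τp) ≤ τ := div_one_sub_le_of_le_div_add_one hτ_succ hτp'
  have hratio_nonneg : 0 ≤ τp / (1 - τp) := div_nonneg hτp.le (by linarith)
  have hβ : τ ^ 2 * L ≤ (1 - τ) ^ 2 * (β₁ * β₂) := by
    have h1τ : 0 < (1 - τ) ^ 2 := pow_pos (sub_pos.2 hτ1) 2
    rw [ge_iff_le, div_mul_eq_mul_div, div_le_iff₀ h1τ] at h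
    linarith
  refine ⟨?_, hτp, hτp_half⟩
  calc τp ^ 2 / (1 - τp) ^ 2 * L = (τp / (1 - τp)) ^ 2 * L := by rw [div_pow]
    _ ≤ τ ^ 2 * L := by gcongr
    _ ≤ (1 - τ) * β₁ * ((1 - τ) * β₂) := by linarith

theorem stmt_9 (τ : ℝ) (hτ : τ ∈ Set.Ioo (0 : ℝ) 1)
    (τp : ℝ) (hτp : 0 < τp) (hτp' : τp ≤ τ / (τ + 1))
    (L : ℝ) (hL : 0 ≤ L)
    (β₁ β₂ : ℝ) (hβ₁ : 0 < β₁) (hβ₂ : 0 < β₂)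
    (h : β₁ * β₂ ≥ τ ^ 2 / (1 - τ) ^ 2 * L) :
    (1 - τ) * β₁ * ((1 - τ) * β₂) ≥ τp ^ 2 / (1 - τp) ^ 2 * L ∧ 0 < τp ∧ τp < 1 / 2 :=
  stmt_9_general τ hτ τp hτp hτp' L hL β₁ β₂ h
end

section
/- Let τ₀ ∈ (0, 1) and define recursively τ_{k+1} := (τ_k/2)·(√(τ_k² + 4) − τ_k). Then for every integer k ≥ 1, the strict bounds τ₀/(1 + 2τ₀k) < τ_k < 2τ₀/(2 + τ₀k) hold. -/
/-!
With `a = 1/x` and `b = 1/y`, where `y = x/2 · (√(x² + 4) - x)`, the recursion becomes `b² - b = a²`,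
i.e. `b = 1/2 + √(a² + 1/4)`, so each step raises the reciprocal by an amount strictly between `1/2`
and `1`. After `k ≥ 1` steps, `1/τ₀ + k/2 < 1/τ_k < 1/τ₀ + k`, and inverting gives the bounds
(the lower one even with `τ₀ k` in place of `2 τ₀ k`).
-/

noncomputable def sqrtStep (x : ℝ) : ℝ := x / 2 * (√(x ^ 2 + 4) - x)

lemma sqrtStep_pos {x : ℝ} (hx : 0 < x) : 0 < sqrtStep x := by
  have hsqrt : x < √(x ^ 2 + 4) := (Real.lt_sqrt hx.le).2 (by linarith)
  exact mul_pos (by positivity) (by linarith)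

lemma sqrtStep_sq (x : ℝ) : sqrtStep x ^ 2 = x ^ 2 * (1 - sqrtStep x) := by
  have hsq : √(x ^ 2 + 4) ^ 2 = x ^ 2 + 4 := Real.sq_sqrt (by positivity)
  unfold sqrtStep
  linear_combination (x ^ 2 / 4) * hsq

lemma inv_sqrtStep_sq_sub {x : ℝ} (hx : 0 < x) :
    (sqrtStep x)⁻¹ ^ 2 - (sqrtStep x)⁻¹ = x⁻¹ ^ 2 := by
  have hy := sqrtStep_pos hx
  have h := sqrtStep_sq x
  field_simp
  linear_combination -h

lemma add_half_lt_and_lt_add_one_of_sq_sub_self_eq {a b : ℝ} (ha : 0 < a) (hb : 0 < b)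
    (h : b ^ 2 - b = a ^ 2) : a + 1 / 2 < b ∧ b < a + 1 := by
  have hb1 : 1 < b := by nlinarith
  constructor <;> nlinarith

lemma inv_add_half_lt_inv_sqrtStep_lt_inv_add_one {x : ℝ} (hx : 0 < x) :
    x⁻¹ + 1 / 2 < (sqrtStep x)⁻¹ ∧ (sqrtStep x)⁻¹ < x⁻¹ + 1 :=
  add_half_lt_and_lt_add_one_of_sq_sub_self_eq (inv_pos.2 hx) (inv_pos.2 (sqrtStep_pos hx))
    (inv_sqrtStep_sq_sub hx)

lemma add_mul_lt_of_forall_add_lt {u : ℕ → ℝ} {c : ℝ} (h : ∀ n, u n + c < u (n + 1))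
    (k : ℕ) : u 0 + (k + 1) * c < u (k + 1) := by
  induction k with
  | zero => simpa using h 0
  | succ k ih =>
    push_cast
    linarith [h (k + 1)]

lemma lt_add_mul_of_forall_lt_add {u : ℕ → ℝ} {d : ℝ} (h : ∀ n, u (n + 1) < u n + d)
    (k : ℕ) : u (k + 1) < u 0 + (k + 1) * d := by
  have := add_mul_lt_of_forall_add_lt (u := fun n ↦ -u n) (c := -d) (fun n ↦ by linarith [h n]) k
  linarith

theorem stmt_14 (τ₀ : ℝ) (hτ₀ : τ₀ ∈ Set.Ioo (0 : ℝ) 1)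
    (τ : ℕ → ℝ) (hτ0 : τ 0 = τ₀)
    (hτrec : ∀ k : ℕ, τ (k + 1) = τ k / 2 * (Real.sqrt ((τ k) ^ 2 + 4) - τ k)) :
    ∀ k : ℕ, 1 ≤ k → τ₀ / (1 + 2 * τ₀ * k) < τ k ∧ τ k < 2 * τ₀ / (2 + τ₀ * k) := by
  have hτ₀pos : 0 < τ₀ := hτ₀.1
  have hτ_eq (n : ℕ) : τ (n + 1) = sqrtStep (τ n) := hτrec n
  have hτ_pos (n : ℕ) : 0 < τ n := by
    induction n with
    | zero => rwa [hτ0]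
    | succ n ih => rw [hτ_eq]; exact sqrtStep_pos ih
  have hinv (n : ℕ) := hτ_eq n ▸ inv_add_half_lt_inv_sqrtStep_lt_inv_add_one (hτ_pos n)
  intro k hk
  obtain ⟨j, rfl⟩ := Nat.exists_eq_add_of_le' hk
  have hlow := add_mul_lt_of_forall_add_lt (u := fun n ↦ (τ n)⁻¹) (fun n ↦ (hinv n).1) j
  have hupp := lt_add_mul_of_forall_lt_add (u := fun n ↦ (τ n)⁻¹) (fun n ↦ (hinv n).2) j
  simp only [hτ0] at hlow hupp
  push_cast
  constructor
  · calc τ₀ / (1 + 2 * τ₀ * (j + 1)) ≤ (τ₀⁻¹ + (j + 1) * 1)⁻¹ := by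
          field_simp
          gcongr
          linarith
      _ < τ (j + 1) := inv_lt_of_inv_lt₀ (hτ_pos _) hupp
  · calc τ (j + 1) < (τ₀⁻¹ + (j + 1) * (1 / 2))⁻¹ := lt_inv_of_lt_inv₀ (by positivity) hlow
      _ = 2 * τ₀ / (2 + τ₀ * (j + 1)) := by field_simp
end

section
/- Let τ₀ ∈ (0, 1), τ_{k+1} := (τ_k/2)·(√(τ_k² + 4) − τ_k), and let β̄ > 0. Define β₁⁰ = β₂⁰ := β̄ and, for k ≥ 0, β₁^{k+1} := (1 − τ_k)β₁^k if k is even and β₁^{k+1} := β₁^k if k is odd, while β₂^{k+1} := β₂^k if k is even and β₂^{k+1} := (1 − τ_k)β₂^k if k is odd. Then for every integer k ≥ 1: (1 − τ₀)β̄/(2τ₀k + 1) < β₁^k < 2β̄√(1 − τ₀)/(τ₀k) and β̄√(1 − τ₀)/(2τ₀k + 1) < β₂^k < 2β̄/(τ₀k). -/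
/-!
With `t = τ_k` and `s = τ_{k+1}` the recursion says exactly that `s` is the positive root of
`s² = t² (1 - s)`. Hence `1/s - 1/t = t/(t + s) ∈ [1/2, 1)`, so `1/τ_k` grows between `k/2` and `k`,
and the product `∏_{j ≤ k} (1 - τ_j)` telescopes to `(1 - τ₀) (τ_k/τ₀)²`.

Every step multiplies exactly one of `β₁, β₂` by `1 - τ_k`, so `β₁^{k+1} β₂^{k+1} = β̄² (1 - τ₀) (τ_k/τ₀)²`.
Since `τ_k` decreases, the alternating updates keep `(1 - τ₀) β₂ ≤ β₁ ≤ β₂`; both factors of the product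
are therefore comparable to `β̄ τ_k/τ₀ ≍ 1/k`.
-/

open Finset

section Step

variable {s t : ℝ}

lemma sq_step_eq (t : ℝ) :
    (t / 2 * (√(t ^ 2 + 4) - t)) ^ 2 = t ^ 2 * (1 - t / 2 * (√(t ^ 2 + 4) - t)) := by
  have hsq : √(t ^ 2 + 4) ^ 2 = t ^ 2 + 4 := Real.sq_sqrt (by positivity)
  linear_combination (t ^ 2 / 4) * hsq

lemma step_pos (ht : 0 < t) : 0 < t / 2 * (√(t ^ 2 + 4) - t) := by
  have : t < √(t ^ 2 + 4) := Real.lt_sqrt_of_sq_lt (by linarith)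
  have : 0 < √(t ^ 2 + 4) - t := by linarith
  positivity

lemma step_lt_one (t : ℝ) : t / 2 * (√(t ^ 2 + 4) - t) < 1 := by
  have hsq : √(t ^ 2 + 4) ^ 2 = t ^ 2 + 4 := Real.sq_sqrt (by positivity)
  have hnn : 0 ≤ √(t ^ 2 + 4) := Real.sqrt_nonneg _
  nlinarith [sq_nonneg (t * √(t ^ 2 + 4) - t ^ 2 - 2)]

lemma lt_of_sq_eq_sq_mul_one_sub (hs : 0 < s) (ht : 0 < t) (h : s ^ 2 = t ^ 2 * (1 - s)) :
    s < t :=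
  lt_of_pow_lt_pow_left₀ 2 ht.le (by rw [h]; nlinarith [mul_pos (pow_pos ht 2) hs])

lemma inv_sub_inv_of_sq_eq_sq_mul_one_sub (hs : 0 < s) (ht : 0 < t)
    (h : s ^ 2 = t ^ 2 * (1 - s)) : s⁻¹ - t⁻¹ = t / (t + s) := by
  field_simp
  linear_combination -h

lemma inv_mem_Icc_of_sq_eq_sq_mul_one_sub (hs : 0 < s) (ht : 0 < t)
    (h : s ^ 2 = t ^ 2 * (1 - s)) : s⁻¹ ∈ Set.Icc (t⁻¹ + 1 / 2) (t⁻¹ + 1) := by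
  have hdiff := inv_sub_inv_of_sq_eq_sq_mul_one_sub hs ht h
  have hst := lt_of_sq_eq_sq_mul_one_sub hs ht h
  have hhalf : 1 / 2 ≤ t / (t + s) := by
    rw [le_div_iff₀ (by positivity)]; linarith
  have hone : t / (t + s) ≤ 1 := by
    rw [div_le_one (by positivity)]; linarith
  constructor <;> linarith

end Step

section Tau

variable (τ : ℕ → ℝ) (hτrec : ∀ k : ℕ, τ (k + 1) = τ k / 2 * (√(τ k ^ 2 + 4) - τ k))
include hτrec

lemma tau_pos (h0 : 0 < τ 0) (k : ℕ) : 0 < τ k := by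
  induction k with
  | zero => exact h0
  | succ k ih => rw [hτrec]; exact step_pos ih

lemma tau_lt_one (h0 : τ 0 < 1) : ∀ k, τ k < 1
  | 0 => h0
  | k + 1 => by rw [hτrec]; exact step_lt_one _

lemma tau_succ_sq (k : ℕ) : τ (k + 1) ^ 2 = τ k ^ 2 * (1 - τ (k + 1)) := by
  rw [hτrec]; exact sq_step_eq _

lemma tau_succ_lt (h0 : 0 < τ 0) (k : ℕ) : τ (k + 1) < τ k :=
  lt_of_sq_eq_sq_mul_one_sub (tau_pos τ hτrec h0 _) (tau_pos τ hτrec h0 k) (tau_succ_sq τ hτrec k)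

lemma inv_tau_mem_Icc (h0 : 0 < τ 0) (k : ℕ) :
    (τ k)⁻¹ ∈ Set.Icc ((τ 0)⁻¹ + k / 2) ((τ 0)⁻¹ + k) := by
  induction k with
  | zero => simp
  | succ k ih =>
    have hstep := inv_mem_Icc_of_sq_eq_sq_mul_one_sub (tau_pos τ hτrec h0 _)
      (tau_pos τ hτrec h0 k) (tau_succ_sq τ hτrec k)
    push_cast
    constructor <;> linarith [ih.1, ih.2, hstep.1, hstep.2]

lemma prod_one_sub_tau (h0 : τ 0 ≠ 0) (k : ℕ) :
    ∏ j ∈ range (k + 1), (1 - τ j) = (1 - τ 0) * (τ k / τ 0) ^ 2 := by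
  induction k with
  | zero => simp [h0]
  | succ k ih =>
    rw [prod_range_succ, ih, div_pow, div_pow, tau_succ_sq τ hτrec k]
    ring

lemma one_div_two_mul_add_one_lt_tau_div (h0 : τ 0 ∈ Set.Ioo 0 1) (k : ℕ) :
    1 / (2 * τ 0 * (k + 1) + 1) < τ k / τ 0 := by
  obtain ⟨h0pos, h0lt⟩ := h0
  have hpos := tau_pos τ hτrec h0pos k
  have hinv := (inv_tau_mem_Icc τ hτrec h0pos k).2
  rw [inv_le_iff_one_le_mul₀ hpos] at hinv
  have hτ₀ : τ 0 ≤ τ k * (1 + τ 0 * k) := by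
    have := mul_le_mul_of_nonneg_left hinv h0pos.le
    rw [mul_one, ← mul_assoc, mul_add, mul_inv_cancel₀ h0pos.ne'] at this
    linarith
  rw [div_lt_div_iff₀ (by positivity) h0pos]
  nlinarith [mul_pos hpos h0pos]

lemma tau_div_lt_two_div (h0 : τ 0 ∈ Set.Ioo 0 1) (k : ℕ) :
    τ k / τ 0 < 2 / (τ 0 * (k + 1)) := by
  obtain ⟨h0pos, h0lt⟩ := h0
  have hpos := tau_pos τ hτrec h0pos k
  have hinv := (inv_tau_mem_Icc τ hτrec h0pos k).1
  rw [le_inv_comm₀ (by positivity) hpos] at hinv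
  have hlt : ((k : ℝ) + 1) / 2 < (τ 0)⁻¹ + k / 2 := by
    have : 1 < (τ 0)⁻¹ := one_lt_inv₀ h0pos |>.mpr h0lt
    linarith
  calc τ k / τ 0 ≤ ((τ 0)⁻¹ + k / 2)⁻¹ / τ 0 := by gcongr
    _ < (((k : ℝ) + 1) / 2)⁻¹ / τ 0 := by gcongr
    _ = 2 / (τ 0 * (k + 1)) := by field_simp

end Tau

section Beta

variable (τ β₁ β₂ : ℕ → ℝ)
  (hβ₁rec : ∀ k : ℕ, β₁ (k + 1) = if Even k then (1 - τ k) * β₁ k else β₁ k)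
  (hβ₂rec : ∀ k : ℕ, β₂ (k + 1) = if Even k then β₂ k else (1 - τ k) * β₂ k)

include hβ₁rec hβ₂rec in
lemma mul_eq_mul_prod (k : ℕ) : β₁ k * β₂ k = β₁ 0 * β₂ 0 * ∏ j ∈ range k, (1 - τ j) := by
  induction k with
  | zero => simp
  | succ k ih =>
    rw [prod_range_succ, hβ₁rec, hβ₂rec, ← mul_assoc, ← ih]
    split_ifs <;> ring

include hβ₁rec in
lemma beta₁_pos (hτ : ∀ k, τ k < 1) (h0 : 0 < β₁ 0) (k : ℕ) : 0 < β₁ k := by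
  induction k with
  | zero => exact h0
  | succ k ih =>
    have : 0 < 1 - τ k := by linarith [hτ k]
    rw [hβ₁rec]; split_ifs <;> positivity

include hβ₂rec in
lemma beta₂_pos (hτ : ∀ k, τ k < 1) (h0 : 0 < β₂ 0) (k : ℕ) : 0 < β₂ k := by
  induction k with
  | zero => exact h0
  | succ k ih =>
    have : 0 < 1 - τ k := by linarith [hτ k]
    rw [hβ₂rec]; split_ifs <;> positivity

include hβ₁rec hβ₂rec in
/-- The factor `1 - τ_k` on the side of the coordinate that is updated next is what makes the
sandwich `(1 - τ₀) β₂ ≤ β₁ ≤ β₂` inductive. -/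
lemma beta_invariant (hτ : ∀ k, τ k < 1) (hanti : ∀ k, τ (k + 1) ≤ τ k) (hb : 0 < β₁ 0)
    (h0 : β₁ 0 = β₂ 0) (k : ℕ) :
    if Even k then (1 - τ 0) * β₂ k ≤ (1 - τ k) * β₁ k ∧ β₁ k ≤ β₂ k
    else (1 - τ 0) * β₂ k ≤ β₁ k ∧ β₁ k ≤ (1 - τ k) * β₂ k := by
  induction k with
  | zero => simp [h0]
  | succ k ih =>
    have hτk : 0 ≤ 1 - τ k := by linarith [hτ k]
    have hmono : 1 - τ k ≤ 1 - τ (k + 1) := by linarith [hanti k]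
    have hβ₁ := beta₁_pos τ β₁ hβ₁rec hτ hb k
    have hβ₂ := beta₂_pos τ β₂ hβ₂rec hτ (h0 ▸ hb) k
    rw [hβ₁rec, hβ₂rec]
    by_cases hk : Even k
    · have hk' : ¬Even (k + 1) := by simp [Nat.even_add_one, hk]
      simp only [hk, hk', if_true, if_false] at ih ⊢
      exact ⟨ih.1, by nlinarith [ih.2]⟩
    · have hk' : Even (k + 1) := Nat.even_add_one.mpr hk
      simp only [hk, hk', if_true, if_false] at ih ⊢
      exact ⟨by nlinarith [ih.1], ih.2⟩

include hβ₁rec hβ₂rec in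
lemma beta_sandwich (hτnn : ∀ k, 0 ≤ τ k) (hτ : ∀ k, τ k < 1) (hanti : ∀ k, τ (k + 1) ≤ τ k)
    (hb : 0 < β₁ 0) (h0 : β₁ 0 = β₂ 0) (k : ℕ) : (1 - τ 0) * β₂ k ≤ β₁ k ∧ β₁ k ≤ β₂ k := by
  have hinv := beta_invariant τ β₁ β₂ hβ₁rec hβ₂rec hτ hanti hb h0 k
  have hτk := hτnn k
  have hβ₁ := beta₁_pos τ β₁ hβ₁rec hτ hb k
  have hβ₂ := beta₂_pos τ β₂ hβ₂rec hτ (h0 ▸ hb) k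
  split_ifs at hinv
  · exact ⟨by nlinarith [hinv.1], hinv.2⟩
  · exact ⟨hinv.1, by nlinarith [hinv.2]⟩

end Beta

lemma sandwich_of_mul_eq {x y c q : ℝ} (hx : 0 ≤ x) (hy : 0 ≤ y) (hq : 0 ≤ q) (hc : 0 < c)
    (hxy : x * y = c * q ^ 2) (hcyx : c * y ≤ x) (hxy_le : x ≤ y) :
    c * q ≤ x ∧ x ≤ √c * q ∧ √c * q ≤ y ∧ y ≤ q := by
  have hsq : √c ^ 2 = c := Real.sq_sqrt hc.le
  have hm : 0 ≤ √c * q := by positivity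
  refine ⟨?_, ?_, ?_, ?_⟩
  · nlinarith [mul_le_mul_of_nonneg_left hcyx hx]
  · nlinarith
  · nlinarith
  · have : c * y ^ 2 ≤ c * q ^ 2 := by nlinarith [mul_le_mul_of_nonneg_right hcyx hy]
    exact (pow_le_pow_iff_left₀ hy hq two_ne_zero).mp (le_of_mul_le_mul_left this hc)

theorem stmt_15 (τ₀ βb : ℝ) (hτ₀ : τ₀ ∈ Set.Ioo (0 : ℝ) 1) (hβb : 0 < βb)
    (τ : ℕ → ℝ) (hτ0 : τ 0 = τ₀)
    (hτrec : ∀ k : ℕ, τ (k + 1) = τ k / 2 * (Real.sqrt ((τ k) ^ 2 + 4) - τ k))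
    (β₁ β₂ : ℕ → ℝ) (hβ₁0 : β₁ 0 = βb) (hβ₂0 : β₂ 0 = βb)
    (hβ₁rec : ∀ k : ℕ, β₁ (k + 1) = if Even k then (1 - τ k) * β₁ k else β₁ k)
    (hβ₂rec : ∀ k : ℕ, β₂ (k + 1) = if Even k then β₂ k else (1 - τ k) * β₂ k) :
    ∀ k : ℕ, 1 ≤ k →
      ((1 - τ₀) * βb / (2 * τ₀ * k + 1) < β₁ k ∧ β₁ k < 2 * βb * Real.sqrt (1 - τ₀) / (τ₀ * k)) ∧
      (βb * Real.sqrt (1 - τ₀) / (2 * τ₀ * k + 1) < β₂ k ∧ β₂ k < 2 * βb / (τ₀ * k)) := by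
  intro n hn
  obtain ⟨k, rfl⟩ := Nat.exists_eq_add_of_le' hn
  subst hτ0
  obtain ⟨hτ₀pos, hτ₀lt⟩ := id hτ₀
  have hτpos := tau_pos τ hτrec hτ₀pos
  have hτ := tau_lt_one τ hτrec hτ₀lt
  have hβ₁pos := beta₁_pos τ β₁ hβ₁rec hτ (hβ₁0 ▸ hβb)
  have hβ₂pos := beta₂_pos τ β₂ hβ₂rec hτ (hβ₂0 ▸ hβb)
  have hc : 0 < 1 - τ 0 := by linarith
  have hsc : 0 < √(1 - τ 0) := Real.sqrt_pos.mpr hc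
  set q := βb * (τ k / τ 0)
  have hq : 0 ≤ q := by have := hτpos k; positivity
  have hq_lo : βb / (2 * τ 0 * (k + 1) + 1) < q := by
    simpa only [mul_one_div] using
      mul_lt_mul_of_pos_left (one_div_two_mul_add_one_lt_tau_div τ hτrec hτ₀ k) hβb
  have hq_hi : q < 2 * βb / (τ 0 * (k + 1)) :=
    (mul_lt_mul_of_pos_left (tau_div_lt_two_div τ hτrec hτ₀ k) hβb).trans_eq (by ring)
  have hprod : β₁ (k + 1) * β₂ (k + 1) = (1 - τ 0) * q ^ 2 := by
    rw [mul_eq_mul_prod τ β₁ β₂ hβ₁rec hβ₂rec, prod_one_sub_tau τ hτrec hτ₀pos.ne', hβ₁0, hβ₂0]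
    ring
  obtain ⟨hcx, hxy⟩ := beta_sandwich τ β₁ β₂ hβ₁rec hβ₂rec (fun k ↦ (hτpos k).le) hτ
    (fun k ↦ (tau_succ_lt τ hτrec hτ₀pos k).le) (hβ₁pos 0) (hβ₁0.trans hβ₂0.symm) (k + 1)
  obtain ⟨h₁, h₂, h₃, h₄⟩ :=
    sandwich_of_mul_eq (hβ₁pos _).le (hβ₂pos _).le hq hc hprod hcx hxy
  push_cast
  refine ⟨⟨?_, ?_⟩, ?_, ?_⟩
  · rw [mul_div_assoc]; exact (mul_lt_mul_of_pos_left hq_lo hc).trans_le h₁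
  · calc β₁ (k + 1) ≤ √(1 - τ 0) * q := h₂
      _ < √(1 - τ 0) * (2 * βb / (τ 0 * (k + 1))) := mul_lt_mul_of_pos_left hq_hi hsc
      _ = _ := by ring
  · calc βb * √(1 - τ 0) / (2 * τ 0 * (k + 1) + 1)
        = √(1 - τ 0) * (βb / (2 * τ 0 * (k + 1) + 1)) := by ring
      _ < √(1 - τ 0) * q := mul_lt_mul_of_pos_left hq_lo hsc
      _ ≤ β₂ (k + 1) := h₃
  · exact h₄.trans_lt hq_hi
end

section
/- (Gap estimates for the unsmoothed excessive gap condition.) Suppose β₂ > 0, x̄ ∈ X, ȳ ∈ ℝ^m, the condition f(x̄; β₂) ≤ d(ȳ) holds, and y* is a maximizer of the dual function d over ℝ^m. Then −2β₂‖y*‖² ≤ −‖y*‖·‖A x̄ − b‖ ≤ φ(x̄) − d(ȳ) ≤ 0 and ‖A x̄ − b‖ ≤ 2β₂‖y*‖. -/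
/-! Weak duality at `x̄` and maximality of `y*` give `d(ȳ) ≤ d(y*) ≤ φ(x̄) + ⟪Ax̄ - b, y*⟫`, while the
excessive gap condition gives `φ(x̄) + ‖Ax̄ - b‖² / (2β₂) ≤ d(ȳ)`. Cauchy–Schwarz turns the first chain
into the lower bound on the gap `φ(x̄) - d(ȳ)`, the second into the upper bound, and comparing them gives
`‖Ax̄ - b‖² / (2β₂) ≤ ‖y*‖ ‖Ax̄ - b‖`, i.e. `‖Ax̄ - b‖ ≤ 2β₂ ‖y*‖`. -/

open scoped RealInnerProductSpace

lemma le_two_mul_mul_of_sq_div_le {a c β : ℝ} (hβ : 0 < β) (ha : 0 ≤ a) (hc : 0 ≤ c)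
    (h : a ^ 2 / (2 * β) ≤ c * a) : a ≤ 2 * β * c := by
  rw [div_le_iff₀ (by positivity)] at h
  rcases ha.eq_or_lt with rfl | ha
  · positivity
  · nlinarith

section ExcessiveGap

variable {E : Type*} [NormedAddCommGroup E] [InnerProductSpace ℝ E]

/-- Here `p = φ(x̄)`, `r = Ax̄ - b`, `y = y*`, `dBar = d(ȳ)` and `dStar = d(y*)`. -/
theorem excessive_gap_bounds {p dBar dStar β : ℝ} {r y : E} (hβ : 0 < β)
    (hweak : dStar ≤ p + ⟪r, y⟫) (hmax : dBar ≤ dStar)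
    (hgap : p + ‖r‖ ^ 2 / (2 * β) ≤ dBar) :
    -(2 * β * ‖y‖ ^ 2) ≤ -(‖y‖ * ‖r‖) ∧ -(‖y‖ * ‖r‖) ≤ p - dBar ∧ p - dBar ≤ 0 ∧
      ‖r‖ ≤ 2 * β * ‖y‖ := by
  have hcs : ⟪r, y⟫ ≤ ‖y‖ * ‖r‖ := (real_inner_le_norm r y).trans_eq (mul_comm _ _)
  have hsq : 0 ≤ ‖r‖ ^ 2 / (2 * β) := by positivity
  have hres : ‖r‖ ≤ 2 * β * ‖y‖ :=
    le_two_mul_mul_of_sq_div_le hβ (norm_nonneg r) (norm_nonneg y) (by linarith)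
  have hprod : ‖y‖ * ‖r‖ ≤ 2 * β * ‖y‖ ^ 2 := by
    nlinarith [mul_le_mul_of_nonneg_left hres (norm_nonneg y)]
  exact ⟨neg_le_neg hprod, by linarith, by linarith, hres⟩

end ExcessiveGap

theorem stmt_17_general {m n₁ n₂ : ℕ}
    (X1 : Set (EuclideanSpace ℝ (Fin n₁))) (X2 : Set (EuclideanSpace ℝ (Fin n₂)))
    (φ₁ : EuclideanSpace ℝ (Fin n₁) → ℝ) (φ₂ : EuclideanSpace ℝ (Fin n₂) → ℝ)
    (A₁ : EuclideanSpace ℝ (Fin n₁) →L[ℝ] EuclideanSpace ℝ (Fin m))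
    (A₂ : EuclideanSpace ℝ (Fin n₂) →L[ℝ] EuclideanSpace ℝ (Fin m))
    (b : EuclideanSpace ℝ (Fin m))
    (d : EuclideanSpace ℝ (Fin m) → ℝ)
    (hd : ∀ y, IsLeast
      ((fun x : EuclideanSpace ℝ (Fin n₁) × EuclideanSpace ℝ (Fin n₂) =>
        φ₁ x.1 + φ₂ x.2 + ⟪A₁ x.1 + A₂ x.2 - b, y⟫) '' (X1 ×ˢ X2)) (d y))
    (β₂ : ℝ) (hβ₂ : 0 < β₂)
    (xb : EuclideanSpace ℝ (Fin n₁) × EuclideanSpace ℝ (Fin n₂))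
    (hxb : xb ∈ X1 ×ˢ X2)
    (yb : EuclideanSpace ℝ (Fin m))
    (hgap : φ₁ xb.1 + φ₂ xb.2 + ‖A₁ xb.1 + A₂ xb.2 - b‖ ^ 2 / (2 * β₂) ≤ d yb)
    (ys : EuclideanSpace ℝ (Fin m)) (hys : ∀ y, d y ≤ d ys) :
    -(2 * β₂ * ‖ys‖ ^ 2) ≤ -(‖ys‖ * ‖A₁ xb.1 + A₂ xb.2 - b‖) ∧
    -(‖ys‖ * ‖A₁ xb.1 + A₂ xb.2 - b‖) ≤ φ₁ xb.1 + φ₂ xb.2 - d yb ∧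
    φ₁ xb.1 + φ₂ xb.2 - d yb ≤ 0 ∧
    ‖A₁ xb.1 + A₂ xb.2 - b‖ ≤ 2 * β₂ * ‖ys‖ :=
  excessive_gap_bounds hβ₂ ((hd ys).2 ⟨xb, hxb, rfl⟩) (hys yb) hgap

theorem stmt_17 {m n₁ n₂ : ℕ} (hm : 0 < m) (hn₁ : 0 < n₁) (hn₂ : 0 < n₂)
    (X1 : Set (EuclideanSpace ℝ (Fin n₁))) (X2 : Set (EuclideanSpace ℝ (Fin n₂)))
    (hX1ne : X1.Nonempty) (hX1cp : IsCompact X1) (hX1cv : Convex ℝ X1)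
    (hX2ne : X2.Nonempty) (hX2cp : IsCompact X2) (hX2cv : Convex ℝ X2)
    (φ₁ : EuclideanSpace ℝ (Fin n₁) → ℝ) (φ₂ : EuclideanSpace ℝ (Fin n₂) → ℝ)
    (hφ₁c : Continuous φ₁) (hφ₁cv : ConvexOn ℝ Set.univ φ₁)
    (hφ₂c : Continuous φ₂) (hφ₂cv : ConvexOn ℝ Set.univ φ₂)
    (A₁ : EuclideanSpace ℝ (Fin n₁) →L[ℝ] EuclideanSpace ℝ (Fin m))
    (A₂ : EuclideanSpace ℝ (Fin n₂) →L[ℝ] EuclideanSpace ℝ (Fin m))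
    (b : EuclideanSpace ℝ (Fin m))
    (d : EuclideanSpace ℝ (Fin m) → ℝ)
    (hd : ∀ y, IsLeast
      ((fun x : EuclideanSpace ℝ (Fin n₁) × EuclideanSpace ℝ (Fin n₂) =>
        φ₁ x.1 + φ₂ x.2 + ⟪A₁ x.1 + A₂ x.2 - b, y⟫) '' (X1 ×ˢ X2)) (d y))
    (β₂ : ℝ) (hβ₂ : 0 < β₂)
    (xb : EuclideanSpace ℝ (Fin n₁) × EuclideanSpace ℝ (Fin n₂))
    (hxb : xb ∈ X1 ×ˢ X2)
    (yb : EuclideanSpace ℝ (Fin m))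
    (hgap : φ₁ xb.1 + φ₂ xb.2 + ‖A₁ xb.1 + A₂ xb.2 - b‖ ^ 2 / (2 * β₂) ≤ d yb)
    (ys : EuclideanSpace ℝ (Fin m)) (hys : ∀ y, d y ≤ d ys) :
    -(2 * β₂ * ‖ys‖ ^ 2) ≤ -(‖ys‖ * ‖A₁ xb.1 + A₂ xb.2 - b‖) ∧
    -(‖ys‖ * ‖A₁ xb.1 + A₂ xb.2 - b‖) ≤ φ₁ xb.1 + φ₂ xb.2 - d yb ∧
    φ₁ xb.1 + φ₂ xb.2 - d yb ≤ 0 ∧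
    ‖A₁ xb.1 + A₂ xb.2 - b‖ ≤ 2 * β₂ * ‖ys‖ :=
  stmt_17_general X1 X2 φ₁ φ₂ A₁ A₂ b d hd β₂ hβ₂ xb hxb yb hgap ys hys
end
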